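/- Let K be a commutative ring, P a finite poset, and x < y in P. For every chain [x_1<⋯<x_n<x_{n+1}=y] in C_{n+1}(y) one has (∂∘b_x^y + b_x^y∘∂)[x_1<⋯<x_n<x_{n+1}=y] = [x_1<⋯<x_{n-1}=x] if x_{n-1} = x, and (∂∘b_x^y + b_x^y∘∂)[x_1<⋯<x_n<x_{n+1}=y] = 0 otherwise. -/

import Mathlib

open Finsupp

/-- A strictly increasing chain of `n + 1` elements of `P` ending at `x`;
this models the chains `[x₁ < ⋯ < x_{n+1} = x]` of length `n + 1`. -/
def PChain (P : Type*) [PartialOrder P] (n : ℕ) (x : P) : Type _ :=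
  {f : Fin (n + 1) → P // StrictMono f ∧ f (Fin.last n) = x}

/-- `CC K P n x` is the free `K`-module on chains of `n + 1` elements ending at `x`;
it models the module `C_{n+1}(x)` of the paper. -/
abbrev CC (K : Type*) [CommRing K] (P : Type*) [PartialOrder P] (n : ℕ) (x : P) :=
  PChain P n x →₀ K

namespace PChain

variable {P : Type*} [PartialOrder P]

/-- Remove the entry at position `i` of a chain (never the last position). -/
def remove {n : ℕ} {x : P} (f : PChain P (n + 1) x) (i : Fin (n + 1)) : PChain P n x :=
  ⟨f.1 ∘ (Fin.castSucc i).succAbove, f.2.1.comp (Fin.strictMono_succAbove _), by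
    have h : (Fin.castSucc i).succAbove (Fin.last n) = Fin.last (n + 1) := by
      rw [Fin.succAbove_of_le_castSucc _ _
        (Fin.castSucc_le_castSucc_iff.mpr (Fin.le_last i))]
      exact Fin.succ_last n
    show f.1 _ = x
    rw [h, f.2.2]⟩

/-- Prepend an element `a` below the first entry of a chain. -/
def prepend {n : ℕ} {x : P} (f : PChain P n x) (a : P) (h : a < f.1 0) :
    PChain P (n + 1) x := by
  refine ⟨Fin.cons a f.1, ?_, ?_⟩
  · rw [Fin.strictMono_iff_lt_succ]
    intro i
    refine Fin.cases ?_ (fun j => ?_) i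
    · simpa using h
    · rw [← Fin.succ_castSucc, Fin.cons_succ, Fin.cons_succ]
      exact f.2.1 (Fin.castSucc_lt_succ : Fin.castSucc j < j.succ)
  · exact f.2.2

/-- Drop the last entry of a chain, whose second-to-last entry is `x`. -/
def truncate {n : ℕ} {y : P} (f : PChain P (n + 1) y) {x : P}
    (h : f.1 (Fin.castSucc (Fin.last n)) = x) : PChain P n x :=
  ⟨f.1 ∘ Fin.castSucc, f.2.1.comp Fin.strictMono_castSucc, h⟩

/-- Drop the last two entries of a chain, whose third-to-last entry is `x`. -/
def truncate2 {n : ℕ} {y : P} (f : PChain P (n + 2) y) {x : P}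
    (h : f.1 ((Fin.last n).castSucc.castSucc) = x) : PChain P n x :=
  ⟨f.1 ∘ fun i => (Fin.castSucc (Fin.castSucc i)),
    f.2.1.comp (Fin.strictMono_castSucc.comp Fin.strictMono_castSucc), h⟩

end PChain

/-- The boundary map `∂ : C_{n+2}(x) → C_{n+1}(x)`. -/
noncomputable def bdry (K : Type*) [CommRing K] {P : Type*} [PartialOrder P] (n : ℕ) (x : P) :
    CC K P (n + 1) x →ₗ[K] CC K P n x :=
  Finsupp.lsum K fun f => LinearMap.toSpanSingleton K (CC K P n x)
    (∑ i : Fin (n + 1), ((-1 : K) ^ (i : ℕ)) • Finsupp.single (f.remove i) (1 : K))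

open Classical in
/-- The contracting homotopy `c`, prepending the least element `a`. -/
noncomputable def contra (K : Type*) [CommRing K] {P : Type*} [PartialOrder P] (a : P)
    (n : ℕ) (x : P) : CC K P n x →ₗ[K] CC K P (n + 1) x :=
  Finsupp.lsum K fun f => LinearMap.toSpanSingleton K (CC K P (n + 1) x)
    (if h : a < f.1 0 then Finsupp.single (f.prepend a h) (1 : K) else 0)

open Classical in
/-- The connecting map `b_x^y : C_{n+2}(y) → C_{n+1}(x)`. -/
noncomputable def bmap (K : Type*) [CommRing K] {P : Type*} [PartialOrder P] (x y : P)
    (n : ℕ) : CC K P (n + 1) y →ₗ[K] CC K P n x :=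
  Finsupp.lsum K fun f => LinearMap.toSpanSingleton K (CC K P n x)
    (if h : f.1 (Fin.castSucc (Fin.last n)) = x then
      ((-1 : K) ^ (n + 1)) • Finsupp.single (f.truncate h) (1 : K)
    else 0)

namespace PChain

variable {P : Type*} [PartialOrder P] {n : ℕ} {y : P}

lemma remove_castSucc_penultimate (f : PChain P (n + 2) y) (i : Fin (n + 1)) :
    (f.remove i.castSucc).1 (Fin.last n).castSucc = f.1 (Fin.last (n + 1)).castSucc := by
  refine congrArg f.1 ?_
  rw [Fin.succAbove_of_le_castSucc _ _ (by simpa using Fin.le_last i), Fin.succ_castSucc,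
    Fin.succ_last]

lemma remove_last_penultimate (f : PChain P (n + 2) y) :
    (f.remove (Fin.last (n + 1))).1 (Fin.last n).castSucc =
      f.1 (Fin.last n).castSucc.castSucc := by
  refine congrArg f.1 (Fin.ext ?_)
  simp [Fin.succAbove, Fin.lt_def]

lemma truncate_remove_castSucc {x : P} (f : PChain P (n + 2) y)
    (h : f.1 (Fin.last (n + 1)).castSucc = x) (i : Fin (n + 1)) :
    (f.remove i.castSucc).truncate ((f.remove_castSucc_penultimate i).trans h) =
      (f.truncate h).remove i :=
  Subtype.ext <| funext fun _ => congrArg f.1 Fin.castSucc_succAbove_castSucc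

lemma truncate_remove_last {x : P} (f : PChain P (n + 2) y)
    (h : f.1 (Fin.last n).castSucc.castSucc = x) :
    (f.remove (Fin.last (n + 1))).truncate (f.remove_last_penultimate.trans h) =
      f.truncate2 h :=
  Subtype.ext <| funext fun j => congrArg f.1 <|
    Fin.succAbove_of_castSucc_lt _ _ (by simp)

end PChain

section

variable {K : Type*} [CommRing K] {P : Type*} [PartialOrder P] {n : ℕ} {x y : P}

lemma bdry_single (f : PChain P (n + 1) x) :
    bdry K n x (single f 1) = ∑ i : Fin (n + 1), (-1 : K) ^ (i : ℕ) • single (f.remove i) 1 := by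
  rw [bdry, lsum_single, LinearMap.toSpanSingleton_apply, one_smul]

open Classical in
lemma bmap_single (f : PChain P (n + 1) y) :
    bmap K x y n (single f 1) =
      if h : f.1 (Fin.last n).castSucc = x then
        (-1 : K) ^ (n + 1) • single (f.truncate h) 1
      else 0 := by
  rw [bmap, lsum_single, LinearMap.toSpanSingleton_apply, one_smul]

open Classical in
lemma bmap_single_remove_castSucc (f : PChain P (n + 2) y) (i : Fin (n + 1)) :
    bmap K x y n (single (f.remove i.castSucc) 1) =
      if h : f.1 (Fin.last (n + 1)).castSucc = x then
        (-1 : K) ^ (n + 1) • single ((f.truncate h).remove i) 1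
      else 0 := by
  rw [bmap_single]
  by_cases h : f.1 (Fin.last (n + 1)).castSucc = x
  · rw [dif_pos ((f.remove_castSucc_penultimate i).trans h), dif_pos h,
      f.truncate_remove_castSucc h i]
  · rw [dif_neg (fun h' => h ((f.remove_castSucc_penultimate i).symm.trans h')), dif_neg h]

open Classical in
lemma bmap_single_remove_last (f : PChain P (n + 2) y) :
    bmap K x y n (single (f.remove (Fin.last (n + 1))) 1) =
      if h : f.1 (Fin.last n).castSucc.castSucc = x then
        (-1 : K) ^ (n + 1) • single (f.truncate2 h) 1
      else 0 := by
  rw [bmap_single]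
  by_cases h : f.1 (Fin.last n).castSucc.castSucc = x
  · rw [dif_pos (f.remove_last_penultimate.trans h), dif_pos h, f.truncate_remove_last h]
  · rw [dif_neg (fun h' => h (f.remove_last_penultimate.symm.trans h')), dif_neg h]

open Classical in
lemma bdry_bmap_single (f : PChain P (n + 2) y) :
    bdry K n x (bmap K x y (n + 1) (single f 1)) =
      if h : f.1 (Fin.last (n + 1)).castSucc = x then
        (-1 : K) ^ (n + 2) • bdry K n x (single (f.truncate h) 1)
      else 0 := by
  rw [bmap_single]
  split_ifs <;> simp only [map_smul, map_zero]

open Classical in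
/-- Deleting an entry other than the last two commutes with truncation, which gives the first
summand; deleting the penultimate entry gives the second. -/
lemma bmap_bdry_single (f : PChain P (n + 2) y) :
    bmap K x y n (bdry K (n + 1) y (single f 1)) =
      (if h : f.1 (Fin.last (n + 1)).castSucc = x then
        (-1 : K) ^ (n + 1) • bdry K n x (single (f.truncate h) 1)
      else 0) +
      if h : f.1 (Fin.last n).castSucc.castSucc = x then single (f.truncate2 h) 1 else 0 := by
  rw [bdry_single, map_sum, Fin.sum_univ_castSucc]
  simp only [map_smul, bmap_single_remove_castSucc, bmap_single_remove_last, Fin.val_castSucc,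
    Fin.val_last]
  congr 1
  · split_ifs with h
    · simp only [bdry_single, Finset.smul_sum, smul_smul, mul_comm]
    · simp
  · split_ifs
    · rw [smul_smul, ← pow_add, Even.neg_one_pow ⟨n + 1, rfl⟩, one_smul]
    · rw [smul_zero]

end

open Classical in
/-- The chain `f` has `n + 3` entries, so the paper's `x_{n-1}` is
`f.1 ((Fin.last n).castSucc.castSucc)`; smaller chains are trivial since `C_n(x) = 0` for
`n ≤ 0`. -/
theorem statement_2 (K : Type*) [CommRing K] (P : Type*) [PartialOrder P]
    (x y : P) (n : ℕ) (f : PChain P (n + 2) y) :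
    (bdry K n x ∘ₗ bmap K x y (n + 1) + bmap K x y n ∘ₗ bdry K (n + 1) y)
        (Finsupp.single f (1 : K)) =
      if h : f.1 ((Fin.last n).castSucc.castSucc) = x then
        Finsupp.single (f.truncate2 h) (1 : K)
      else 0 := by
  rw [LinearMap.add_apply, LinearMap.comp_apply, LinearMap.comp_apply, bdry_bmap_single,
    bmap_bdry_single, ← add_assoc]
  have hsign : (-1 : K) ^ (n + 2) + (-1) ^ (n + 1) = 0 := by ring
  split_ifs <;> simp only [← add_smul, hsign, zero_smul, add_zero, zero_add]
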